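/- Let x, y ∈ ℤ² be non-collinear such that the triangle Δ with vertices 0, x, x+y contains at least one interior lattice point. Then there exists an interior lattice point z of Δ such that the triangle with vertices 0, z, x contains no interior lattice point and deg(z) = deg(x−z) = 1. -/

import Mathlib

/-!
Choose an interior lattice point `z` of `Δ` minimising `|det(x, z)|`, i.e. closest to the line
through `0` and `x`. For `0 < a < 1`, `0 ≤ b`, `a + b ≤ 1` the point `a z + b x` is again interior
to `Δ` (by convexity, since `0` and `x` are vertices) and `|det(x, a z + b x)| = a |det(x, z)|`,
so it is not a lattice point. A lattice point inside the triangle `0, z, x`, the point `z / g` for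
`g = deg z ≥ 2`, and `z + (x - z) / g` for `g = deg (x - z) ≥ 2` would all be of this form.
-/

/-- The image of a lattice point in the real plane. -/
def toR2 (p : ℤ × ℤ) : ℝ × ℝ := ((p.1 : ℝ), (p.2 : ℝ))

/-- The triangle (convex hull) with vertices `a`, `b`, `c` in the real plane. -/
def tri3 (a b c : ℤ × ℤ) : Set (ℝ × ℝ) := convexHull ℝ {toR2 a, toR2 b, toR2 c}

def det2 {R : Type*} [CommRing R] (p q : R × R) : R := p.1 * q.2 - p.2 * q.1

section Det2

variable {R : Type*} [CommRing R]

@[simp] lemma det2_self (p : R × R) : det2 p p = 0 := by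
  unfold det2; ring

lemma det2_swap (p q : R × R) : det2 q p = -det2 p q := by
  unfold det2; ring

lemma det2_add_right (p q r : R × R) : det2 p (q + r) = det2 p q + det2 p r := by
  simp only [det2, Prod.fst_add, Prod.snd_add]; ring

lemma det2_smul_right (p q : R × R) (a : R) : det2 p (a • q) = a * det2 p q := by
  simp only [det2, Prod.smul_fst, Prod.smul_snd, smul_eq_mul]; ring

lemma det2_smul_left (p q : R × R) (a : R) : det2 (a • p) q = a * det2 p q := by
  simp only [det2, Prod.smul_fst, Prod.smul_snd, smul_eq_mul]; ring

end Det2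

lemma affineIndependent_zero_of_det2_ne_zero {A B : ℝ × ℝ} (h : det2 A B ≠ 0) :
    AffineIndependent ℝ ![0, A, B] := by
  rw [affineIndependent_iff_not_collinear_set]
  intro hcol
  obtain ⟨v, hv⟩ := (collinear_iff_of_mem (Set.mem_insert _ _)).mp hcol
  obtain ⟨a, rfl⟩ := hv A (by simp)
  obtain ⟨b, rfl⟩ := hv B (by simp)
  simp [det2_smul_left, det2_smul_right, vadd_eq_add] at h

noncomputable def affineBasisOfDet2 {A B : ℝ × ℝ} (h : det2 A B ≠ 0) :
    AffineBasis (Fin 3) ℝ (ℝ × ℝ) where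
  toFun := ![0, A, B]
  ind' := affineIndependent_zero_of_det2_ne_zero h
  tot' := by
    rw [(affineIndependent_zero_of_det2_ne_zero h).affineSpan_eq_top_iff_card_eq_finrank_add_one]
    simp

lemma exists_coords_of_mem_interior_convexHull {A B p : ℝ × ℝ} (h : det2 A B ≠ 0)
    (hp : p ∈ interior (convexHull ℝ {0, A, B})) :
    ∃ s t : ℝ, 0 < s ∧ 0 < t ∧ s + t < 1 ∧ p = s • A + t • B := by
  let b := affineBasisOfDet2 h
  have hrange : Set.range b = {0, A, B} := by
    change Set.range ![0, A, B] = _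
    simp only [Matrix.range_cons, Matrix.range_empty, Set.singleton_union, Set.union_empty]
  rw [← hrange, b.interior_convexHull] at hp
  refine ⟨b.coord 1 p, b.coord 2 p, hp 1, hp 2, ?_, ?_⟩
  · have := b.sum_coord_apply_eq_one p
    rw [Fin.sum_univ_three] at this
    linarith [hp 0]
  · have := b.linear_combination_coord_eq_self p
    rw [Fin.sum_univ_three] at this
    change _ • 0 + _ • A + _ • B = p at this
    rw [smul_zero, zero_add] at this
    exact this.symm

lemma det2_ne_zero_of_mem_interior_convexHull {A B p : ℝ × ℝ} (h : det2 A B ≠ 0)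
    (hp : p ∈ interior (convexHull ℝ {0, A, B})) : det2 A p ≠ 0 := by
  obtain ⟨s, t, -, ht, -, rfl⟩ := exists_coords_of_mem_interior_convexHull h hp
  rw [det2_add_right, det2_smul_right, det2_smul_right, det2_self]
  simpa using ⟨ht.ne', h⟩

lemma Convex.smul_add_smul_mem_interior {E : Type*} [AddCommGroup E] [Module ℝ E]
    [TopologicalSpace E] [IsTopologicalAddGroup E] [ContinuousConstSMul ℝ E] {s : Set E}
    (hs : Convex ℝ s) (h0 : 0 ∈ s) {v w : E} (hv : v ∈ interior s) (hw : w ∈ s) {a b : ℝ}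
    (ha : 0 < a) (hb : 0 ≤ b) (hab : a + b ≤ 1) : a • v + b • w ∈ interior s := by
  have hc : 0 < a + b := by linarith
  have hu : (a / (a + b)) • v + (b / (a + b)) • w ∈ interior s :=
    hs.combo_interior_self_mem_interior hv hw (by positivity) (by positivity) (by field_simp)
  have := hs.combo_interior_self_mem_interior hu h0 hc (by linarith) (add_sub_cancel _ _)
  rwa [smul_zero, add_zero, smul_add, smul_smul, smul_smul, mul_div_cancel₀ _ hc.ne',
    mul_div_cancel₀ _ hc.ne'] at this

lemma toR2_zero : toR2 0 = 0 := by simp [toR2]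

lemma toR2_add (p q : ℤ × ℤ) : toR2 (p + q) = toR2 p + toR2 q := by simp [toR2]

lemma toR2_sub (p q : ℤ × ℤ) : toR2 (p - q) = toR2 p - toR2 q := by simp [toR2]

lemma toR2_smul (n : ℤ) (p : ℤ × ℤ) : toR2 (n • p) = (n : ℝ) • toR2 p := by simp [toR2]

lemma det2_toR2 (p q : ℤ × ℤ) : det2 (toR2 p) (toR2 q) = ((det2 p q : ℤ) : ℝ) := by
  simp [det2, toR2]

lemma tri3_zero (a b : ℤ × ℤ) : tri3 0 a b = convexHull ℝ {0, toR2 a, toR2 b} := by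
  rw [tri3, toR2_zero]

lemma exists_eq_smul_of_gcd_ne_one {v : ℤ × ℤ} (hv : v ≠ 0) (hg : Int.gcd v.1 v.2 ≠ 1) :
    ∃ g : ℕ, 2 ≤ g ∧ ∃ w : ℤ × ℤ, v = (g : ℤ) • w := by
  have hg0 : Int.gcd v.1 v.2 ≠ 0 := fun h0 => hv (Prod.ext_iff.mpr (Int.gcd_eq_zero_iff.mp h0))
  obtain ⟨a, ha⟩ := Int.gcd_dvd_left v.1 v.2
  obtain ⟨b, hb⟩ := Int.gcd_dvd_right v.1 v.2
  exact ⟨_, by omega, (a, b), Prod.ext ha hb⟩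

section ClosestInteriorPoint

variable {x y z : ℤ × ℤ} (hxy : det2 x y ≠ 0) (hz : toR2 z ∈ interior (tri3 0 x (x + y)))
  -- `|det2 x w|` is `‖x‖` times the distance from `w` to the line through `0` and `x`
  (hmin : ∀ w : ℤ × ℤ, toR2 w ∈ interior (tri3 0 x (x + y)) →
    (det2 x z).natAbs ≤ (det2 x w).natAbs)
include hxy hz

lemma det2_ne_zero_of_mem_interior_tri3 : det2 x z ≠ 0 := by
  rw [tri3_zero, toR2_add] at hz
  have h : det2 (toR2 x) (toR2 x + toR2 y) ≠ 0 := by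
    rwa [det2_add_right, det2_self, zero_add, det2_toR2, Int.cast_ne_zero]
  have hxz := det2_ne_zero_of_mem_interior_convexHull h hz
  rwa [det2_toR2, Int.cast_ne_zero] at hxz

include hmin

lemma toR2_ne_smul_add_smul_of_minimal (p : ℤ × ℤ) {a b : ℝ} (ha : 0 < a) (ha1 : a < 1)
    (hb : 0 ≤ b) (hab : a + b ≤ 1) : toR2 p ≠ a • toR2 z + b • toR2 x := by
  intro hp
  have hconv : Convex ℝ (tri3 0 x (x + y)) := convex_convexHull ℝ _
  have hp_int : toR2 p ∈ interior (tri3 0 x (x + y)) := hp ▸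
    hconv.smul_add_smul_mem_interior (subset_convexHull ℝ _ (by simp [toR2_zero])) hz
      (subset_convexHull ℝ _ (by simp)) ha hb hab
  have hdet : ((det2 x p : ℤ) : ℝ) = a * det2 x z := by
    rw [← det2_toR2 x p, hp, det2_add_right, det2_smul_right, det2_smul_right, det2_self, det2_toR2]
    ring
  have hz0 : (0 : ℝ) < |((det2 x z : ℤ) : ℝ)| :=
    abs_pos.mpr (Int.cast_ne_zero (α := ℝ) |>.mpr (det2_ne_zero_of_mem_interior_tri3 hxy hz))
  have hle := (Nat.cast_le (α := ℝ)).mpr (hmin p hp_int)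
  rw [Nat.cast_natAbs, Nat.cast_natAbs, Int.cast_abs, Int.cast_abs, hdet, abs_mul,
    abs_of_pos ha] at hle
  nlinarith

lemma notMem_interior_tri3_of_minimal (p : ℤ × ℤ) : toR2 p ∉ interior (tri3 0 z x) := by
  intro hp
  rw [tri3_zero] at hp
  have hzx : det2 (toR2 z) (toR2 x) ≠ 0 := by
    rw [det2_swap, neg_ne_zero, det2_toR2, Int.cast_ne_zero]
    exact det2_ne_zero_of_mem_interior_tri3 hxy hz
  obtain ⟨σ, τ, hσ, hτ, hστ, hpστ⟩ := exists_coords_of_mem_interior_convexHull hzx hp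
  exact toR2_ne_smul_add_smul_of_minimal hxy hz hmin p hσ (by linarith) hτ.le hστ.le hpστ

lemma gcd_eq_one_of_minimal : Int.gcd z.1 z.2 = 1 := by
  by_contra hg
  have hz0 : z ≠ 0 := by
    rintro rfl
    exact det2_ne_zero_of_mem_interior_tri3 hxy hz (by simp [det2])
  obtain ⟨g, hg2, w, rfl⟩ := exists_eq_smul_of_gcd_ne_one hz0 hg
  have hg1 : (g : ℝ)⁻¹ < 1 := inv_lt_one_of_one_lt₀ (by exact_mod_cast hg2)
  refine toR2_ne_smul_add_smul_of_minimal hxy hz hmin w (b := 0) (by positivity) hg1 le_rfl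
    (by linarith) ?_
  rw [toR2_smul, zero_smul, add_zero, smul_smul, Int.cast_natCast,
    inv_mul_cancel₀ (by positivity), one_smul]

lemma gcd_sub_eq_one_of_minimal : Int.gcd (x - z).1 (x - z).2 = 1 := by
  by_contra hg
  have hxz : x - z ≠ 0 := by
    rw [sub_ne_zero]
    rintro rfl
    exact det2_ne_zero_of_mem_interior_tri3 hxy hz (det2_self x)
  obtain ⟨g, hg2, w, hw⟩ := exists_eq_smul_of_gcd_ne_one hxz hg
  have hg1 : (g : ℝ)⁻¹ < 1 := inv_lt_one_of_one_lt₀ (by exact_mod_cast hg2)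
  have hw' : toR2 w = (g : ℝ)⁻¹ • (toR2 x - toR2 z) := by
    rw [← toR2_sub, hw, toR2_smul, smul_smul, Int.cast_natCast,
      inv_mul_cancel₀ (by positivity), one_smul]
  refine toR2_ne_smul_add_smul_of_minimal hxy hz hmin (z + w) (a := 1 - (g : ℝ)⁻¹)
    (b := (g : ℝ)⁻¹) (by linarith) (sub_lt_self 1 (by positivity)) (by positivity) (by linarith) ?_
  rw [toR2_add, hw']
  module

end ClosestInteriorPoint

/-- If the triangle `Δ` with vertices `0, x, x+y` (for non-collinear `x, y`) has an interior
lattice point, then it has an interior lattice point `z` such that the triangle with vertices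
`0, z, x` has no interior lattice point and `deg z = deg (x - z) = 1`. -/
theorem exists_good_interior_point (x y : ℤ × ℤ)
    (h : x.1 * y.2 - x.2 * y.1 ≠ 0)
    (hne : ∃ w : ℤ × ℤ, toR2 w ∈ interior (tri3 0 x (x + y))) :
    ∃ z : ℤ × ℤ, toR2 z ∈ interior (tri3 0 x (x + y)) ∧
      (∀ p : ℤ × ℤ, toR2 p ∉ interior (tri3 0 z x)) ∧
      Int.gcd z.1 z.2 = 1 ∧ Int.gcd (x - z).1 (x - z).2 = 1 := by
  let S : Set (ℤ × ℤ) := {w | toR2 w ∈ interior (tri3 0 x (x + y))}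
  obtain ⟨z, hz, hmin⟩ : ∃ z ∈ S, ∀ w ∈ S, (det2 x z).natAbs ≤ (det2 x w).natAbs :=
    ⟨_, Function.argminOn_mem _ S hne, fun _ hw => Function.argminOn_le (det2 x · |>.natAbs) S hw⟩
  exact ⟨z, hz, notMem_interior_tri3_of_minimal h hz hmin,
    gcd_eq_one_of_minimal h hz hmin, gcd_sub_eq_one_of_minimal h hz hmin⟩
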